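/- For every finite graph H (loops allowed) and every connected finite simple graph G on n ≥ 2 vertices, hom(G,H) ≤ hom(K_{1,n−1},H), where K_{1,n−1} is the star on n vertices. -/

import Mathlib

/-!
Write `d(b)` for the number of `H`-neighbours of `b`, so that `hom(K_{1,n-1}, H) = ∑_b d(b)^(n-1)`.
The theorem is the case `k = 0` of a rooted, weighted statement proved by induction on `n`:
for connected `G` on `n` vertices, any root `w` and any `k`,
`∑_{f : G → H} d(f w)^k ≤ ∑_b d(b)^(n-1+k)`.
Remove a vertex `y ≠ w` whose deletion keeps `G` connected (a leaf of a spanning tree) and let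
`x` be a neighbour of `y`. Since `f y` ranges over the neighbours of `f x`, the left side is at
most `∑_{g : G - y → H} d(g w)^k d(g x)`. Weighted AM-GM, `(k+1) a b^k ≤ a^(k+1) + k b^(k+1)`,
bounds this by an average of the sums rooted at `x` and at `w` with exponent `k + 1`, and the
induction hypothesis applies to both.
-/

/-- The number of `H`-colorings of a simple graph `G`, where the target graph (with loops
allowed) is given by a symmetric adjacency relation `H` on its vertex type. -/
noncomputable def homCount {α β : Type*} (G : SimpleGraph α) (H : β → β → Prop) : ℕ :=
  Nat.card {f : α → β // ∀ ⦃u v⦄, G.Adj u v → H (f u) (f v)}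

open Finset

theorem mul_mul_pow_le_pow_add_mul_pow {R : Type*} [CommSemiring R] [LinearOrder R]
    [IsStrictOrderedRing R] [ExistsAddOfLE R] {x y : R} (hx : 0 ≤ x) (hy : 0 ≤ y) (k : ℕ) :
    (k + 1) * (x * y ^ k) ≤ x ^ (k + 1) + k * y ^ (k + 1) := by
  induction k with
  | zero => simp
  | succ k ih =>
    have rearrange : x * y ^ (k + 1) + y * x ^ (k + 1) ≤ x * x ^ (k + 1) + y * y ^ (k + 1) := by
      rcases le_total x y with h | h
      · exact mul_add_mul_le_mul_add_mul h (pow_le_pow_left₀ hx h _)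
      · exact mul_add_mul_le_mul_add_mul' h (pow_le_pow_left₀ hy h _)
    push_cast
    calc (k + 1 + 1) * (x * y ^ (k + 1)) = (k + 1) * (x * y ^ k) * y + x * y ^ (k + 1) := by ring
      _ ≤ (x ^ (k + 1) + k * y ^ (k + 1)) * y + x * y ^ (k + 1) := by gcongr
      _ = (x * y ^ (k + 1) + y * x ^ (k + 1)) + k * y ^ (k + 2) := by ring
      _ ≤ (x * x ^ (k + 1) + y * y ^ (k + 1)) + k * y ^ (k + 2) := by gcongr
      _ = x ^ (k + 1 + 1) + (k + 1) * y ^ (k + 1 + 1) := by ring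

namespace SimpleGraph

variable {V : Type*} {G : SimpleGraph V}

theorem Connected.exists_ne_connected_induce_compl_singleton [Finite V] [Nontrivial V]
    (hG : G.Connected) (w : V) : ∃ y, y ≠ w ∧ (G.induce {y}ᶜ).Connected := by
  obtain ⟨T, hTG, hT⟩ := hG.exists_isTree_le
  have := Fintype.ofFinite V
  classical
  obtain ⟨u, v, huv, hu, hv⟩ := hT.exists_ne_and_degree_eq_one
  have leaf_removal {y : V} (hy : T.degree y = 1) : (G.induce {y}ᶜ).Connected :=
    (hT.connected.induce_compl_singleton_of_degree_eq_one hy).mono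
      fun _ _ h ↦ hTG h
  by_cases huw : u = w
  · exact ⟨v, by rintro rfl; exact huv huw, leaf_removal hv⟩
  · exact ⟨u, huw, leaf_removal hu⟩

end SimpleGraph

section

variable {α β : Type*}

abbrev HColoring (G : SimpleGraph α) (H : β → β → Prop) : Type _ :=
  {f : α → β // ∀ ⦃u v⦄, G.Adj u v → H (f u) (f v)}

noncomputable instance [Finite α] [Finite β] (G : SimpleGraph α) (H : β → β → Prop) :
    Fintype (HColoring G H) :=
  Fintype.ofFinite _

noncomputable def relDegree (H : β → β → Prop) (b : β) : ℕ :=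
  Nat.card {c // H b c}

def HColoring.restrict {G : SimpleGraph α} {H : β → β → Prop} (s : Set α) (f : HColoring G H) :
    HColoring (G.induce s) H :=
  ⟨f.1 ∘ (↑), fun _ _ h ↦ f.2 h⟩

theorem sum_comp_restrict_le_sum_mul_relDegree [Finite α] [Finite β] {G : SimpleGraph α}
    {H : β → β → Prop} {x y : α} (hxy : G.Adj x y)
    (F : HColoring (G.induce {y}ᶜ) H → ℕ) :
    ∑ f : HColoring G H, F (f.restrict {y}ᶜ) ≤
      ∑ g, F g * relDegree H (g.1 ⟨x, hxy.ne⟩) := by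
  classical
  rw [← Fintype.sum_fiberwise' (HColoring.restrict {y}ᶜ) F]
  gcongr with g
  rw [sum_const, card_univ, smul_eq_mul, mul_comm, ← Nat.card_eq_fintype_card]
  gcongr
  -- a coloring in the fibre over `g` is determined by its colour at `y`, a neighbour of `g x`
  refine Nat.card_le_card_of_injective (fun f ↦ ⟨f.1.1 y, ?_⟩) fun f₁ f₂ h ↦ ?_
  · obtain ⟨f, rfl⟩ := f
    exact f.2 hxy
  · ext a
    by_cases hay : a = y
    · subst hay
      exact congrArg Subtype.val h
    · exact congrArg (fun g ↦ g.1 ⟨a, hay⟩) (f₁.2.trans f₂.2.symm)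

theorem sum_relDegree_pow_eq_of_subsingleton [Subsingleton α] [Fintype β]
    (G : SimpleGraph α) (H : β → β → Prop) (w : α) (k : ℕ) :
    ∑ f : HColoring G H, relDegree H (f.1 w) ^ k = ∑ b : β, relDegree H b ^ k := by
  refine Fintype.sum_bijective (fun f ↦ f.1 w) ⟨fun f₁ f₂ h ↦ ?_, fun b ↦ ?_⟩ _ _ fun _ ↦ rfl
  · ext a
    rwa [Subsingleton.elim a w]
  · exact ⟨⟨fun _ ↦ b, fun u v h ↦ (G.ne_of_adj h (Subsingleton.elim u v)).elim⟩, rfl⟩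

theorem sum_relDegree_pow_le [Finite α] [Fintype β] {G : SimpleGraph α} (H : β → β → Prop)
    (hG : G.Connected) (w : α) (k : ℕ) :
    ∑ f : HColoring G H, relDegree H (f.1 w) ^ k ≤
      ∑ b, relDegree H b ^ (Nat.card α - 1 + k) := by
  induction hn : Nat.card α using Nat.strong_induction_on generalizing α k with | _ n ih
  rcases subsingleton_or_nontrivial α with hα | hα
  · have : n ≤ 1 := hn ▸ Finite.card_le_one_iff_subsingleton.mpr hα
    rw [sum_relDegree_pow_eq_of_subsingleton, show n - 1 + k = k by omega]
  obtain ⟨y, hyw, hG'⟩ := hG.exists_ne_connected_induce_compl_singleton w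
  obtain ⟨x, hyx⟩ := hG.preconnected.exists_adj_of_nontrivial y
  have hcard : Nat.card ({y}ᶜ : Set α) = n - 1 := by
    rw [Nat.card_coe_set_eq, ← hn, ← Set.ncard_add_ncard_compl {y}, Set.ncard_singleton]
    omega
  have h2 : 2 ≤ n := hn ▸ Finite.one_lt_card_iff_nontrivial.mpr hα
  set S := ∑ b, relDegree H b ^ (n - 1 + k)
  have ih' (v : ({y}ᶜ : Set α)) :
      ∑ g : HColoring (G.induce {y}ᶜ) H, relDegree H (g.1 v) ^ (k + 1) ≤ S := by
    convert ih _ (by omega) hG' v (k + 1) hcard using 3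
    omega
  set w' : ({y}ᶜ : Set α) := ⟨w, hyw.symm⟩
  set x' : ({y}ᶜ : Set α) := ⟨x, hyx.ne'⟩
  refine Nat.le_of_mul_le_mul_left ?_ k.succ_pos
  calc (k + 1) * ∑ f : HColoring G H, relDegree H (f.1 w) ^ k
      ≤ (k + 1) * ∑ g : HColoring (G.induce {y}ᶜ) H,
          relDegree H (g.1 w') ^ k * relDegree H (g.1 x') := by
        gcongr
        exact sum_comp_restrict_le_sum_mul_relDegree hyx.symm fun g ↦ relDegree H (g.1 w') ^ k
    _ ≤ ∑ g : HColoring (G.induce {y}ᶜ) H,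
          (relDegree H (g.1 x') ^ (k + 1) + k * relDegree H (g.1 w') ^ (k + 1)) := by
        rw [mul_sum]
        gcongr with g
        rw [mul_comm (_ ^ k)]
        exact mul_mul_pow_le_pow_add_mul_pow (Nat.zero_le _) (Nat.zero_le _) k
    _ = ∑ g : HColoring (G.induce {y}ᶜ) H, relDegree H (g.1 x') ^ (k + 1) +
          k * ∑ g : HColoring (G.induce {y}ᶜ) H, relDegree H (g.1 w') ^ (k + 1) := by
        rw [sum_add_distrib, mul_sum]
    _ ≤ S + k * S := by gcongr <;> apply ih'
    _ = (k + 1) * S := by ring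

def HColoring.starEquiv {κ ι : Type*} [Unique κ] (H : β → β → Prop) [Std.Symm H] :
    HColoring (completeBipartiteGraph κ ι) H ≃ Σ b : β, ι → {c // H b c} where
  toFun f := ⟨f.1 (.inl default), fun j ↦ ⟨f.1 (.inr j), f.2 (by simp)⟩⟩
  invFun p := ⟨Sum.elim (fun _ ↦ p.1) (fun j ↦ (p.2 j).1), by
    rintro (i | i) (j | j) hadj <;> simp_all [(p.2 _).2, Std.Symm.symm _ _ (p.2 _).2]⟩
  left_inv f := by
    ext (i | j)
    · simp [Unique.eq_default i]
    · rfl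
  right_inv _ := rfl

theorem homCount_star {κ ι : Type*} [Unique κ] [Finite ι] [Fintype β] (H : β → β → Prop)
    [Std.Symm H] :
    homCount (completeBipartiteGraph κ ι) H = ∑ b, relDegree H b ^ Nat.card ι := by
  rw [homCount, Nat.card_congr (HColoring.starEquiv H), Nat.card_sigma]
  simp [relDegree, Nat.card_fun]

end

theorem homCount_le_star_general {α β : Type*} [Fintype α] [Fintype β]
    (H : β → β → Prop) (hSymm : Symmetric H)
    (G : SimpleGraph α) (n : ℕ) (hcard : Fintype.card α = n)
    (hGconn : G.Connected) :
    homCount G H ≤ homCount (completeBipartiteGraph (Fin 1) (Fin (n - 1))) H := by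
  obtain ⟨w⟩ := hGconn.nonempty
  have hbound := sum_relDegree_pow_le H hGconn w 0
  have : Std.Symm H := ⟨fun _ _ h ↦ hSymm h⟩
  rw [homCount_star H, Nat.card_fin, ← hcard, ← Nat.card_eq_fintype_card]
  simpa [homCount] using hbound

/-- For every finite graph `H` (loops allowed) and every connected simple graph `G` on
`n ≥ 2` vertices, `hom(G,H) ≤ hom(K_{1,n-1},H)`: the star maximizes the number of
`H`-colorings among connected graphs. -/
theorem homCount_le_star {α β : Type*} [Fintype α] [Fintype β]
    (H : β → β → Prop) (hSymm : Symmetric H)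
    (G : SimpleGraph α) (n : ℕ) (hcard : Fintype.card α = n) (hn : 2 ≤ n)
    (hGconn : G.Connected) :
    homCount G H ≤ homCount (completeBipartiteGraph (Fin 1) (Fin (n - 1))) H :=
  homCount_le_star_general H hSymm G n hcard hGconn
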